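/- arXiv:2107.10081 — 4 statements merged into one kernel-verified Lean document; each statement's English description precedes it below -/
import Mathlib

section
/- Let G be a group, E an abelian group, F a subgroup of the center of G, and φ : F → E an injective group homomorphism. Let N = {(f, φ(f)⁻¹) : f ∈ F}, a (central, hence normal) subgroup of G × E, let H = (G × E)/N and let q : G × E → H be the quotient map. Let K ≤ G and K_E ≤ E be subgroups such that every f ∈ F with φ(f) ∈ K_E lies in K, and let U = q(K × K_E) ≤ H. Then for every g ∈ G one has {x ∈ G : q(x,1) ∈ U · q(g,1) · U} = K g K. Consequently, the map of double coset spaces K\G/K → U\H/U sending K g K to U q(g,1) U is injective. -/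
/-!
Writing `q` for the quotient map, `q(x,1) = q(k₁,e₁) q(g,1) q(k₂,e₂)` means that
`n = (x⁻¹ k₁ g k₂, e₁ e₂)` lies in `N`. Its second coordinate lies in `K_E`, so the hypothesis
on `K_E` puts its first coordinate in `K`, whence `x = k₁ g (k₂ n.1⁻¹) ∈ K g K`.
-/

open DoubleCoset QuotientGroup

namespace DoubleCoset

variable {G E : Type*} [Group G] [Group E] {N : Subgroup (G × E)} [N.Normal]
  {K : Subgroup G} {KE : Subgroup E}

theorem mk'_inl_mem_doubleCoset_map_prod_iff (hN : ∀ n ∈ N, n.2 ∈ KE → n.1 ∈ K) {g x : G} :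
    mk' N (x, 1) ∈ doubleCoset (mk' N (g, 1))
        (Subgroup.map (mk' N) (K.prod KE)) (Subgroup.map (mk' N) (K.prod KE)) ↔
      x ∈ doubleCoset g K K := by
  simp only [mem_doubleCoset, SetLike.mem_coe]
  constructor
  · rintro ⟨_, ⟨⟨k₁, e₁⟩, ⟨hk₁, he₁⟩, rfl⟩, _, ⟨⟨k₂, e₂⟩, ⟨hk₂, he₂⟩, rfl⟩, hx⟩
    rw [← map_mul, ← map_mul, mk'_apply, mk'_apply, QuotientGroup.eq] at hx
    have hk : x⁻¹ * (k₁ * g * k₂) ∈ K := by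
      simpa using hN _ hx (by simpa using mul_mem he₁ he₂)
    refine ⟨k₁, hk₁, k₂ * (x⁻¹ * (k₁ * g * k₂))⁻¹, mul_mem hk₂ (inv_mem hk), ?_⟩
    group
  · rintro ⟨k₁, hk₁, k₂, hk₂, rfl⟩
    refine ⟨mk' N (k₁, 1), ⟨_, ⟨hk₁, one_mem _⟩, rfl⟩,
      mk' N (k₂, 1), ⟨_, ⟨hk₂, one_mem _⟩, rfl⟩, ?_⟩
    simp only [← map_mul, Prod.mk_mul_mk, mul_one]

end DoubleCoset

theorem stmt0_general {G E : Type*} [Group G] [CommGroup E]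
    (F : Subgroup G)
    (φ : ↥F →* E)
    (N : Subgroup (G × E)) [N.Normal]
    (hNdef : ∀ x : G × E, x ∈ N ↔ ∃ f : F, x = ((f : G), (φ f)⁻¹))
    (K : Subgroup G) (KE : Subgroup E)
    (hsmall : ∀ f : F, φ f ∈ KE → (f : G) ∈ K)
    (U : Subgroup ((G × E) ⧸ N))
    (hU : U = Subgroup.map (QuotientGroup.mk' N) (K.prod KE)) :
    (∀ g : G,
      {x : G | ∃ u₁ ∈ U, ∃ u₂ ∈ U,
          (QuotientGroup.mk' N) (x, 1) = u₁ * (QuotientGroup.mk' N) (g, 1) * u₂}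
        = {x : G | ∃ k₁ ∈ K, ∃ k₂ ∈ K, x = k₁ * g * k₂}) ∧
    (∀ g g' : G,
      DoubleCoset.mk U U ((QuotientGroup.mk' N) (g, 1)) = DoubleCoset.mk U U ((QuotientGroup.mk' N) (g', 1)) →
        DoubleCoset.mk K K g = DoubleCoset.mk K K g') := by
  have hN : ∀ n ∈ N, n.2 ∈ KE → n.1 ∈ K := by
    intro n hn hn₂
    obtain ⟨f, rfl⟩ := (hNdef n).mp hn
    exact hsmall f (by simpa using hn₂)
  have key (g : G) :
      {x : G | ∃ u₁ ∈ U, ∃ u₂ ∈ U, mk' N (x, 1) = u₁ * mk' N (g, 1) * u₂} =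
        {x : G | ∃ k₁ ∈ K, ∃ k₂ ∈ K, x = k₁ * g * k₂} := by
    ext x
    simpa only [Set.mem_ofPred_eq, mem_doubleCoset, SetLike.mem_coe, ← hU] using
      mk'_inl_mem_doubleCoset_map_prod_iff hN (g := g) (x := x)
  refine ⟨key, fun g g' h => ?_⟩
  rw [DoubleCoset.eq] at h ⊢
  exact (key g).subset h

/-- Let `G` be a group, `E` an abelian group, `F` a subgroup of the
center of `G`, and `φ : F → E` an injective group homomorphism.  Let
`N = {(f, φ(f)⁻¹) : f ∈ F}` (a central, hence normal, subgroup of `G × E`), let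
`H = (G × E)/N` and `q : G × E → H` the quotient map.  Let `K ≤ G` and `K_E ≤ E` be
subgroups such that every `f ∈ F` with `φ f ∈ K_E` lies in `K`, and let
`U = q(K × K_E)`.  Then for every `g ∈ G` one has
`{x ∈ G : q(x,1) ∈ U·q(g,1)·U} = K g K`; consequently the induced map of double coset
spaces `K\G/K → U\H/U`, `KgK ↦ U q(g,1) U`, is injective. -/
theorem stmt0 {G E : Type*} [Group G] [CommGroup E]
    (F : Subgroup G) (hF : F ≤ Subgroup.center G)
    (φ : ↥F →* E) (hφ : Function.Injective φ)
    (N : Subgroup (G × E)) [N.Normal]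
    (hNdef : ∀ x : G × E, x ∈ N ↔ ∃ f : F, x = ((f : G), (φ f)⁻¹))
    (K : Subgroup G) (KE : Subgroup E)
    (hsmall : ∀ f : F, φ f ∈ KE → (f : G) ∈ K)
    (U : Subgroup ((G × E) ⧸ N))
    (hU : U = Subgroup.map (QuotientGroup.mk' N) (K.prod KE)) :
    (∀ g : G,
      {x : G | ∃ u₁ ∈ U, ∃ u₂ ∈ U,
          (QuotientGroup.mk' N) (x, 1) = u₁ * (QuotientGroup.mk' N) (g, 1) * u₂}
        = {x : G | ∃ k₁ ∈ K, ∃ k₂ ∈ K, x = k₁ * g * k₂}) ∧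
    (∀ g g' : G,
      DoubleCoset.mk U U ((QuotientGroup.mk' N) (g, 1)) = DoubleCoset.mk U U ((QuotientGroup.mk' N) (g', 1)) →
        DoubleCoset.mk K K g = DoubleCoset.mk K K g') :=
  stmt0_general F φ N hNdef K KE hsmall U hU
end

section
/- Let A and B be abelian groups, and let ι : A → B and n : B → A be group homomorphisms satisfying n(ι(a)) = a² for all a ∈ A. Let D = {(a², ι(a)⁻¹) : a ∈ A} ≤ A × B and let C = (A × B)/D. Let A₊, A₁ ≤ A and B₀, B₁ ≤ B be subgroups with n(B₀) ⊆ A₊ and n(B₁) ⊆ A₁, and let C₀, C₁ ≤ C be the images of A₊ × B₀ and of A₁ × B₁ respectively. Then the homomorphism A → C, a ↦ [(a,1)], induces an injective map of quotient groups A/(A₊·A₁) → C/(C₀·C₁). -/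
/-!
The map `(a, b) ↦ a * n b` kills `D` because `n (ι a) = a²`, so it descends to a retraction
`r : C → A` of `j : a ↦ [(a, 1)]`. The hypotheses `n(B₀) ⊆ A₊` and `n(B₁) ⊆ A₁` say exactly that
`r` maps `C₀ · C₁` into `A₊ · A₁`, while `j` maps `A₊ · A₁` into `C₀ · C₁`; hence `A₊ · A₁` is the
preimage of `C₀ · C₁` under `j`, which is the injectivity of the induced map of quotients.
-/

open QuotientGroup

theorem QuotientGroup.mk_eq_mk_comap_iff {A C : Type*} [Group A] [Group C] (j : A →* C)
    (K : Subgroup C) (a a' : A) :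
    (mk a : A ⧸ K.comap j) = mk a' ↔ (mk (j a) : C ⧸ K) = mk (j a') := by
  rw [QuotientGroup.eq, QuotientGroup.eq, Subgroup.mem_comap, map_mul, map_inv]

theorem Subgroup.comap_eq_of_leftInverse {A C : Type*} [Group A] [Group C] {j : A →* C}
    {r : C →* A} (hrj : r.comp j = MonoidHom.id A) {H : Subgroup A} {K : Subgroup C}
    (hj : H.map j ≤ K) (hr : K.map r ≤ H) : K.comap j = H := by
  refine le_antisymm (fun a ha => ?_) (Subgroup.map_le_iff_le_comap.mp hj)
  simpa [← MonoidHom.comp_apply, hrj] using hr (Subgroup.mem_map_of_mem r ha)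

section MulMapSnd

variable {A B : Type*} [CommGroup A] [CommGroup B]

def mulMapSnd (n : B →* A) : A × B →* A :=
  MonoidHom.fst A B * n.comp (MonoidHom.snd A B)

@[simp]
theorem mulMapSnd_apply (n : B →* A) (x : A × B) : mulMapSnd n x = x.1 * n x.2 := rfl

theorem le_ker_mulMapSnd {ι : A →* B} {n : B →* A} (hn : ∀ a : A, n (ι a) = a ^ 2)
    {D : Subgroup (A × B)} (hD : ∀ x ∈ D, ∃ a : A, x = (a ^ 2, (ι a)⁻¹)) :
    D ≤ (mulMapSnd n).ker := by
  intro x hx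
  obtain ⟨a, rfl⟩ := hD x hx
  simp [hn]

theorem map_mulMapSnd_prod_le {n : B →* A} {H : Subgroup A} {K : Subgroup B}
    (hK : ∀ b ∈ K, n b ∈ H) : (H.prod K).map (mulMapSnd n) ≤ H := by
  rintro _ ⟨x, ⟨hx₁, hx₂⟩, rfl⟩
  exact mul_mem hx₁ (hK _ hx₂)

end MulMapSnd

theorem Subgroup.map_inl_le_prod {A B : Type*} [Group A] [Group B] (H : Subgroup A)
    (K : Subgroup B) : H.map (MonoidHom.inl A B) ≤ H.prod K := by
  rintro _ ⟨a, ha, rfl⟩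
  exact ⟨ha, one_mem K⟩

/-- Let `A`, `B` be abelian groups, `ι : A → B` and `n : B → A`
homomorphisms with `n (ι a) = a²`.  Let `D = {(a², (ι a)⁻¹) : a ∈ A} ≤ A × B` and
`C = (A × B)/D`.  Let `A₊, A₁ ≤ A` and `B₀, B₁ ≤ B` with `n(B₀) ⊆ A₊`, `n(B₁) ⊆ A₁`,
and let `C₀, C₁ ≤ C` be the images of `A₊ × B₀` and `A₁ × B₁`.  Then `a ↦ [(a,1)]`
induces an injective map `A/(A₊·A₁) → C/(C₀·C₁)` (we state well-definedness and
injectivity together as an `iff`). -/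
theorem stmt1 {A B : Type*} [CommGroup A] [CommGroup B]
    (ι : A →* B) (n : B →* A) (hn : ∀ a : A, n (ι a) = a ^ 2)
    (D : Subgroup (A × B))
    (hD : ∀ x : A × B, x ∈ D ↔ ∃ a : A, x = (a ^ 2, (ι a)⁻¹))
    (Ap A1 : Subgroup A) (B0 B1 : Subgroup B)
    (hB0 : ∀ b ∈ B0, n b ∈ Ap) (hB1 : ∀ b ∈ B1, n b ∈ A1)
    (C0 C1 : Subgroup ((A × B) ⧸ D))
    (hC0 : C0 = Subgroup.map (QuotientGroup.mk' D) (Ap.prod B0))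
    (hC1 : C1 = Subgroup.map (QuotientGroup.mk' D) (A1.prod B1)) :
    ∀ a a' : A,
      ((QuotientGroup.mk a : A ⧸ (Ap ⊔ A1)) = QuotientGroup.mk a')
        ↔ ((QuotientGroup.mk ((QuotientGroup.mk' D) (a, 1)) : ((A × B) ⧸ D) ⧸ (C0 ⊔ C1))
            = QuotientGroup.mk ((QuotientGroup.mk' D) (a', 1))) := by
  let j := (mk' D).comp (MonoidHom.inl A B)
  let r := lift D (mulMapSnd n) (le_ker_mulMapSnd hn fun x => (hD x).mp)
  have hrj : r.comp j = MonoidHom.id A := by ext; simp [j, r]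
  have hj : (Ap ⊔ A1).map j ≤ C0 ⊔ C1 := by
    simp only [j, Subgroup.map_sup, ← Subgroup.map_map, hC0, hC1]
    exact sup_le_sup (Subgroup.map_mono (Subgroup.map_inl_le_prod _ _))
      (Subgroup.map_mono (Subgroup.map_inl_le_prod _ _))
  have hr : (C0 ⊔ C1).map r ≤ Ap ⊔ A1 := by
    simp only [Subgroup.map_sup, hC0, hC1, Subgroup.map_map, r, lift_comp_mk']
    exact sup_le_sup (map_mulMapSnd_prod_le hB0) (map_mulMapSnd_prod_le hB1)
  rw [← Subgroup.comap_eq_of_leftInverse hrj hj hr]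
  exact mk_eq_mk_comap_iff j _
end

section
/- Let G be a group, E an abelian group, c : E → E an automorphism with c∘c = id, F a subgroup of the center of G, and φ : F → E an injective group homomorphism with c(φ(f)) = φ(f) for all f ∈ F and whose image equals the subgroup of c-fixed points of E. Let N = {(f, φ(f)⁻¹) : f ∈ F} ≤ G × E, let H = (G × E)/N and let q : G × E → H be the quotient map. Let K ≤ G and K_E ≤ E be subgroups and set U = q(K × K_E). Let G₀ ≤ G and E₀ ≤ E be subgroups with c(E₀) = E₀ and with {f ∈ F : φ(f) ∈ E₀} ⊆ G₀, and set H₀ = q(G₀ × E₀). Assume: (i) the only element of E₀ of the form y·c(y)⁻¹ with y ∈ K_E is the identity; (ii) every f ∈ F with φ(f) ∈ K_E lies in K. Then for every g ∈ G, the image of G₀ ∩ gKg⁻¹ under x ↦ q(x,1) equals H₀ ∩ q(g,1)·U·q(g,1)⁻¹. -/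
/-! An element `q(gkg⁻¹, y)` of `H₀ ∩ q(g,1)·U·q(g,1)⁻¹` has `y ∈ K_E`; writing it as `q(a, e)`
with `(a, e) ∈ G₀ × E₀` gives `gkg⁻¹ = a·f` and `e = y·φ f` for some `f ∈ F`. As `φ f` is `c`-fixed,
`y·c(y)⁻¹ = e·c(e)⁻¹ ∈ E₀`, so by (i) `y` is `c`-fixed, hence `y = φ f'` with `f' ∈ K` by (ii).
Since `F` is central, `q(gkg⁻¹, y) = q(f'·gkg⁻¹, 1)`, and `f'·gkg⁻¹ = g(f'k)g⁻¹ = a·(f'f)` lies in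
`gKg⁻¹` and, as `φ(f'f) = e ∈ E₀`, in `G₀`. -/

open QuotientGroup Subgroup

theorem Prod.mk_one_mul_mul_inv {G E : Type*} [Group G] [Group E] (g k : G) (y : E) :
    (g, (1 : E)) * (k, y) * (g, (1 : E))⁻¹ = (g * k * g⁻¹, y) := by
  ext <;> simp

section Involution

variable {E : Type*} [CommGroup E] (c : E →* E)

theorem mul_inv_map_mul_of_map_eq {y z : E} (hz : c z = z) :
    y * z * (c (y * z))⁻¹ = y * (c y)⁻¹ := by
  rw [map_mul, hz, mul_inv, mul_mul_mul_comm, mul_inv_cancel, mul_one]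

theorem mul_inv_map_mem {E₀ : Subgroup E} (hE₀ : E₀.map c ≤ E₀) {e : E} (he : e ∈ E₀) :
    e * (c e)⁻¹ ∈ E₀ :=
  E₀.mul_mem he (E₀.inv_mem (hE₀ ⟨e, he, rfl⟩))

end Involution

section Quotient

variable {G E : Type*} [Group G] [CommGroup E] {F : Subgroup G} {φ : F →* E}
  {N : Subgroup (G × E)} [N.Normal]

theorem mk'_mk_mul_inv_eq (g k : G) (y : E) :
    mk' N (g, 1) * mk' N (k, y) * (mk' N (g, 1))⁻¹ = mk' N (g * k * g⁻¹, y) := by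
  rw [← map_inv, ← map_mul, ← map_mul, Prod.mk_one_mul_mul_inv]

theorem mk'_mk_map_mul (hF : F ≤ center G) (hN : ∀ f : F, ((f : G), (φ f)⁻¹) ∈ N)
    (f : F) (x : G) (y : E) : mk' N (x, φ f * y) = mk' N ((f : G) * x, y) := by
  refine (mk'_eq_mk' N).2 ⟨((f : G), (φ f)⁻¹), hN f, ?_⟩
  ext
  · exact mem_center_iff.mp (hF f.2) x
  · simp

theorem exists_mul_mem_of_mk'_mem_map_prod (hN : ∀ z ∈ N, ∃ f : F, z = ((f : G), (φ f)⁻¹))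
    {G₀ : Subgroup G} {E₀ : Subgroup E} {x : G} {y : E}
    (h : mk' N (x, y) ∈ (G₀.prod E₀).map (mk' N)) :
    ∃ f : F, x * (f : G)⁻¹ ∈ G₀ ∧ y * φ f ∈ E₀ := by
  obtain ⟨⟨a, e⟩, ⟨ha, he⟩, hae⟩ := h
  obtain ⟨z, hz, hz_eq⟩ := (mk'_eq_mk' N).1 hae
  obtain ⟨f, rfl⟩ := hN z hz
  obtain ⟨rfl, rfl⟩ := Prod.mk.inj hz_eq
  exact ⟨f, by simpa using ha, by simpa using he⟩

theorem exists_mem_conj_mk'_eq_of_mem_map_prod {c : E →* E} (hF : F ≤ center G)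
    (hN : ∀ z, z ∈ N ↔ ∃ f : F, z = ((f : G), (φ f)⁻¹))
    (hfix : ∀ f : F, c (φ f) = φ f) (hfixall : ∀ y : E, c y = y → ∃ f : F, φ f = y)
    {K G₀ : Subgroup G} {KE E₀ : Subgroup E} (hE₀ : E₀.map c ≤ E₀)
    (hFG₀ : ∀ f : F, φ f ∈ E₀ → (f : G) ∈ G₀)
    (h1 : ∀ y ∈ KE, y * (c y)⁻¹ ∈ E₀ → y * (c y)⁻¹ = 1)
    (h2 : ∀ f : F, φ f ∈ KE → (f : G) ∈ K) {g k : G} (hk : k ∈ K) {y : E} (hy : y ∈ KE)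
    (h : mk' N (g * k * g⁻¹, y) ∈ (G₀.prod E₀).map (mk' N)) :
    ∃ x, (x ∈ G₀ ∧ ∃ k' ∈ K, x = g * k' * g⁻¹) ∧ mk' N (x, 1) = mk' N (g * k * g⁻¹, y) := by
  obtain ⟨f, hxf, hyf⟩ := exists_mul_mem_of_mk'_mem_map_prod (fun z => (hN z).1) h
  have hcy : c y = y := by
    have hdiff := mul_inv_map_mem c hE₀ hyf
    rw [mul_inv_map_mul_of_map_eq c (hfix f)] at hdiff
    exact (mul_inv_eq_one.mp (h1 y hy hdiff)).symm
  obtain ⟨f', rfl⟩ := hfixall y hcy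
  have hf' : ∀ x : G, x * f' = f' * x := mem_center_iff.mp (hF f'.2)
  refine ⟨f' * (g * k * g⁻¹), ⟨?_, f' * k, K.mul_mem (h2 f' hy) hk, ?_⟩, ?_⟩
  · have hff : ((f' * f : F) : G) ∈ G₀ := hFG₀ _ (by rwa [map_mul])
    convert G₀.mul_mem hxf hff using 1
    rw [coe_mul, ← hf' f, ← hf' (g * k * g⁻¹)]
    group
  · simp only [← mul_assoc, hf']
  · simpa using (mk'_mk_map_mul hF (fun f => (hN _).2 ⟨f, rfl⟩) f' (g * k * g⁻¹) 1).symm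

end Quotient

theorem stmt2_general {G E : Type*} [Group G] [CommGroup E]
    (c : E →* E)
    (F : Subgroup G) (hF : F ≤ Subgroup.center G)
    (φ : ↥F →* E)
    (hfix : ∀ f : F, c (φ f) = φ f)
    (hfixall : ∀ y : E, c y = y → ∃ f : F, φ f = y)
    (N : Subgroup (G × E)) [N.Normal]
    (hNdef : ∀ x : G × E, x ∈ N ↔ ∃ f : F, x = ((f : G), (φ f)⁻¹))
    (K : Subgroup G) (KE : Subgroup E)
    (U : Subgroup ((G × E) ⧸ N))
    (hU : U = Subgroup.map (QuotientGroup.mk' N) (K.prod KE))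
    (G₀ : Subgroup G) (E₀ : Subgroup E)
    (hE₀ : Subgroup.map c E₀ = E₀)
    (hFG₀ : ∀ f : F, φ f ∈ E₀ → (f : G) ∈ G₀)
    (H₀ : Subgroup ((G × E) ⧸ N))
    (hH₀ : H₀ = Subgroup.map (QuotientGroup.mk' N) (G₀.prod E₀))
    (h1 : ∀ y ∈ KE, y * (c y)⁻¹ ∈ E₀ → y * (c y)⁻¹ = 1)
    (h2 : ∀ f : F, φ f ∈ KE → (f : G) ∈ K) :
    ∀ g : G,
      (fun x : G => (QuotientGroup.mk' N) (x, 1)) '' {x : G | x ∈ G₀ ∧ ∃ k ∈ K, x = g * k * g⁻¹}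
        = {h : (G × E) ⧸ N | h ∈ H₀ ∧ ∃ u ∈ U,
            h = (QuotientGroup.mk' N) (g, 1) * u * ((QuotientGroup.mk' N) (g, 1))⁻¹} := by
  subst hU hH₀
  intro g
  ext h
  constructor
  · rintro ⟨_, ⟨hx, k, hk, rfl⟩, rfl⟩
    exact ⟨⟨_, ⟨hx, E₀.one_mem⟩, rfl⟩, _, ⟨(k, 1), ⟨hk, KE.one_mem⟩, rfl⟩,
      (mk'_mk_mul_inv_eq g k 1).symm⟩
  · rintro ⟨hH, _, ⟨⟨k, y⟩, ⟨hk, hy⟩, rfl⟩, rfl⟩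
    rw [mk'_mk_mul_inv_eq] at hH ⊢
    exact exists_mem_conj_mk'_eq_of_mem_map_prod hF hNdef hfix hfixall hE₀.le hFG₀ h1 h2 hk hy hH

/-- With `H = (G × E)/N` as before (`F` central in `G`, `φ : F → E`
injective with image the `c`-fixed points of `E`, `c` an involution of `E`),
`U = q(K × K_E)`, `H₀ = q(G₀ × E₀)` where `c(E₀) = E₀` and `{f ∈ F : φ f ∈ E₀} ⊆ G₀`;
assuming (i) the only element of `E₀` of the form `y·c(y)⁻¹` with `y ∈ K_E` is `1`,
and (ii) every `f ∈ F` with `φ f ∈ K_E` lies in `K`, then for every `g ∈ G` the image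
of `G₀ ∩ gKg⁻¹` under `x ↦ q(x,1)` equals `H₀ ∩ q(g,1)·U·q(g,1)⁻¹`. -/
theorem stmt2 {G E : Type*} [Group G] [CommGroup E]
    (c : E →* E) (hc : ∀ y : E, c (c y) = y)
    (F : Subgroup G) (hF : F ≤ Subgroup.center G)
    (φ : ↥F →* E) (hφ : Function.Injective φ)
    (hfix : ∀ f : F, c (φ f) = φ f)
    (hfixall : ∀ y : E, c y = y → ∃ f : F, φ f = y)
    (N : Subgroup (G × E)) [N.Normal]
    (hNdef : ∀ x : G × E, x ∈ N ↔ ∃ f : F, x = ((f : G), (φ f)⁻¹))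
    (K : Subgroup G) (KE : Subgroup E)
    (U : Subgroup ((G × E) ⧸ N))
    (hU : U = Subgroup.map (QuotientGroup.mk' N) (K.prod KE))
    (G₀ : Subgroup G) (E₀ : Subgroup E)
    (hE₀ : Subgroup.map c E₀ = E₀)
    (hFG₀ : ∀ f : F, φ f ∈ E₀ → (f : G) ∈ G₀)
    (H₀ : Subgroup ((G × E) ⧸ N))
    (hH₀ : H₀ = Subgroup.map (QuotientGroup.mk' N) (G₀.prod E₀))
    (h1 : ∀ y ∈ KE, y * (c y)⁻¹ ∈ E₀ → y * (c y)⁻¹ = 1)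
    (h2 : ∀ f : F, φ f ∈ KE → (f : G) ∈ K) :
    ∀ g : G,
      (fun x : G => (QuotientGroup.mk' N) (x, 1)) '' {x : G | x ∈ G₀ ∧ ∃ k ∈ K, x = g * k * g⁻¹}
        = {h : (G × E) ⧸ N | h ∈ H₀ ∧ ∃ u ∈ U,
            h = (QuotientGroup.mk' N) (g, 1) * u * ((QuotientGroup.mk' N) (g, 1))⁻¹} :=
  stmt2_general c F hF φ hfix hfixall N hNdef K KE U hU G₀ E₀ hE₀ hFG₀ H₀ hH₀ h1 h2
end

section
/- Let q > 3 be a power of an odd prime. Regard PSL₂(𝔽_q), the image of SL₂(𝔽_q), as a subgroup of PGL₂(𝔽_q) = GL₂(𝔽_q)/center. Let G be a subgroup of PGL₂(𝔽_q) containing PSL₂(𝔽_q), and let N be a normal subgroup of G containing the image in PGL₂(𝔽_q) of a matrix that is conjugate in GL₂(𝔽_q) to the diagonal matrix diag(1,−1). Then N contains PSL₂(𝔽_q). -/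
/-!
Replacing the conjugating matrix `c` by `c z⁻¹`, where `z` is diagonal with `det z = det c`, does
not change the conjugate of `d = diag(1, -1)`, because diagonal matrices commute; and `c z⁻¹`
lies in `SL₂`. Hence the class
of `d` itself lies in `N`. Conjugation by `d` inverts every transvection, so the commutator of the
transvection `1 + b E_ij` with `d` is `1 + 2b E_ij`. As `2` is invertible, the preimage of `N` in
`GL₂` contains all transvections, and these generate `SL₂`.
-/

/-- The projective general linear group `PGL₂(K) = GL₂(K)/center`. -/
abbrev PGL2 (K : Type*) [Field K] :=
  GL (Fin 2) K ⧸ Subgroup.center (GL (Fin 2) K)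

/-- `PSL₂(K)`, the image of `SL₂(K)` in `PGL₂(K)`. -/
noncomputable def PSL2 (K : Type*) [Field K] : Subgroup (PGL2 K) :=
  ((QuotientGroup.mk' (Subgroup.center (GL (Fin 2) K))).comp
    Matrix.SpecialLinearGroup.toGL).range

open Matrix Matrix.SpecialLinearGroup
open scoped commutatorElement MatrixGroups

namespace Matrix

section CommRing

variable {ι R : Type*} [Fintype ι] [DecidableEq ι] [CommRing R]

theorem diagonal_mul_transvection_of_eq_neg {v : ι → R} {i j : ι} (hv : v j = -v i) (b : R) :
    diagonal v * transvection i j b = transvection i j (-b) * diagonal v := by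
  ext k l
  simp only [transvection, mul_add, add_mul, diagonal_mul, mul_diagonal, single_apply, one_apply,
    add_apply]
  grind

theorem GeneralLinearGroup.commutatorElement_transvection_of_eq_neg {d : GL ι R} {v : ι → R}
    (hd : (d : Matrix ι ι R) = diagonal v) {i j : ι} (hij : i ≠ j) (hv : v j = -v i) (b : R) :
    ⁅toGL (SpecialLinearGroup.transvection hij b), d⁆ =
      toGL (SpecialLinearGroup.transvection hij (2 * b)) := by
  have hflip : d * toGL (SpecialLinearGroup.transvection hij (-b)) =
      toGL (SpecialLinearGroup.transvection hij b) * d := by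
    ext1
    have := diagonal_mul_transvection_of_eq_neg hv (-b)
    rwa [neg_neg, ← hd] at this
  rw [commutatorElement_def, mul_assoc _ d, ← map_inv, transvection_inv, hflip, ← mul_assoc,
    mul_inv_cancel_right, ← map_mul, ← transvection_add, two_mul]

end CommRing

variable {ι F : Type*} [Fintype ι] [DecidableEq ι] [Field F]

theorem GeneralLinearGroup.exists_conj_eq_toGL_conj [Nonempty ι] (c d : GL ι F) {v : ι → F}
    (hd : (d : Matrix ι ι F) = diagonal v) :
    ∃ s : SpecialLinearGroup ι F, c * d * c⁻¹ = toGL s * d * (toGL s)⁻¹ := by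
  obtain ⟨i⟩ := ‹Nonempty ι›
  have hdet : (diagonal (Function.update 1 i (c : Matrix ι ι F).det)).det =
      (c : Matrix ι ι F).det := by
    simp [det_diagonal, Finset.prod_update_of_mem]
  let z : GL ι F := GeneralLinearGroup.mkOfDetNeZero _ (hdet ▸ c.det_ne_zero)
  have hzd : Commute z d := by
    ext1
    simp [z, hd, diagonal_mul_diagonal, mul_comm]
  obtain ⟨s, hs⟩ : ∃ s : SpecialLinearGroup ι F, toGL s = c * z⁻¹ :=
    ⟨⟨(c * z⁻¹ : GL ι F), by simp [z, hdet, c.det_ne_zero]⟩, Units.ext rfl⟩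
  refine ⟨s, ?_⟩
  rw [hs, mul_assoc c z⁻¹, hzd.inv_left.eq]
  group

theorem SL2.range_toGL_le_of_diagonal_mem (h2 : (2 : F) ≠ 0) {M : Subgroup (GL (Fin 2) F)}
    (hM : ∀ s : SL(2, F), ∀ x ∈ M, toGL s * x * (toGL s)⁻¹ ∈ M) {d : GL (Fin 2) F}
    {v : Fin 2 → F} (hd : (d : Matrix (Fin 2) (Fin 2) F) = diagonal v) (hv : v 1 = -v 0)
    (hdM : d ∈ M) : (toGL : SL(2, F) →* GL (Fin 2) F).range ≤ M := by
  have htransvection (i j : Fin 2) (hij : i ≠ j) (b : F) :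
      toGL (SpecialLinearGroup.transvection hij b) ∈ M := by
    have hv' : v j = -v i := by
      fin_cases i <;> fin_cases j <;> simp_all
    rw [← mul_div_cancel₀ b h2,
      ← GeneralLinearGroup.commutatorElement_transvection_of_eq_neg hd hij hv',
      commutatorElement_def]
    exact M.mul_mem (hM _ _ hdM) (M.inv_mem hdM)
  rintro _ ⟨s, rfl⟩
  induction s using SL2.transvection_induction with
  | htransvec i j hij b => exact htransvection i j hij b
  | hmul A B hA hB => rw [map_mul]; exact M.mul_mem hA hB

end Matrix

theorem stmt4_general {K : Type*} [Field K]
    (hchar : ringChar K ≠ 2)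
    (G N : Subgroup (PGL2 K))
    (hPSL : PSL2 K ≤ G)
    (hnormal : ∀ g ∈ G, ∀ x ∈ N, g * x * g⁻¹ ∈ N)
    (hdiag : ∃ m d c : GL (Fin 2) K,
      (↑d : Matrix (Fin 2) (Fin 2) K) = Matrix.diagonal ![1, -1] ∧
      m = c * d * c⁻¹ ∧
      (QuotientGroup.mk m : PGL2 K) ∈ N) :
    PSL2 K ≤ N := by
  obtain ⟨_, d, c, hd, rfl, hmN⟩ := hdiag
  set M := N.comap (QuotientGroup.mk' (Subgroup.center (GL (Fin 2) K)))
  have hM (s : SL(2, K)) (x : GL (Fin 2) K) (hx : x ∈ M) : toGL s * x * (toGL s)⁻¹ ∈ M :=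
    hnormal _ (hPSL ⟨s, rfl⟩) _ hx
  obtain ⟨s, hs⟩ := GeneralLinearGroup.exists_conj_eq_toGL_conj c d hd
  have hdM : d ∈ M := by
    simpa [hs, mul_assoc] using hM s⁻¹ _ (show c * d * c⁻¹ ∈ M from hmN)
  rw [PSL2, MonoidHom.range_comp, Subgroup.map_le_iff_le_comap]
  exact SL2.range_toGL_le_of_diagonal_mem (Ring.two_ne_zero hchar) hM hd (by simp) hdM

/-- Let `q > 3` be a power of an odd prime (formalized as a finite
field `K` with `|K| > 3` of characteristic `≠ 2`).  Let `G ≤ PGL₂(K)` contain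
`PSL₂(K)`, and let `N` be a normal subgroup of `G` containing the image in `PGL₂(K)`
of a matrix conjugate in `GL₂(K)` to `diag(1,−1)`.  Then `N ⊇ PSL₂(K)`. -/
theorem stmt4 {K : Type*} [Field K] [Fintype K]
    (hcard : 3 < Fintype.card K) (hchar : ringChar K ≠ 2)
    (G N : Subgroup (PGL2 K))
    (hPSL : PSL2 K ≤ G)
    (hNG : N ≤ G)
    (hnormal : ∀ g ∈ G, ∀ x ∈ N, g * x * g⁻¹ ∈ N)
    (hdiag : ∃ m d c : GL (Fin 2) K,
      (↑d : Matrix (Fin 2) (Fin 2) K) = Matrix.diagonal ![1, -1] ∧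
      m = c * d * c⁻¹ ∧
      (QuotientGroup.mk m : PGL2 K) ∈ N) :
    PSL2 K ≤ N :=
  stmt4_general hchar G N hPSL hnormal hdiag
end
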